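/- Let e₁, e₂, e₃ be the standard basis of ℝ³ and let R = {±(e_i − e_j) : 1 ≤ i < j ≤ 3} ∪ {±(2e_i − e_j − e_k) : {i,j,k} = {1,2,3}} (the root system of type G₂). Set Q¹ = {e₁ − e₃, 2e₁ − e₂ − e₃, e₁ + e₃ − 2e₂} and Q² = {e₁ − e₃, 2e₁ − e₂ − e₃, e₁ + e₂ − 2e₃}. If Q is a maximal element, with respect to inclusion, of the family 𝔔(R), then there exists a bijective linear map T of the span of R onto itself with T(R) = R such that T(Q) = Q¹ or T(Q) = Q². -/
import Mathlib

/-- `Q ∈ 𝔔(R)`: (i) `Q ∩ (−Q) = ∅` and `α + β ∉ R` for all `α, β ∈ Q`;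
(ii) every element of `R` is a ℤ-linear combination of elements of `Q`. -/
def MemQSet {V : Type*} [AddCommGroup V] (R Q : Set V) : Prop :=
  Q ⊆ R ∧ (∀ α ∈ Q, -α ∉ Q) ∧ (∀ α ∈ Q, ∀ β ∈ Q, α + β ∉ R) ∧
  (∀ γ ∈ R, γ ∈ Submodule.span ℤ Q)

/-- The standard basis vector `e i` of `ℝⁿ`. -/
def stdVec {n : ℕ} (i : Fin n) : Fin n → ℝ := Pi.single i 1

/-- `s` is a sign, `s = ±1`. -/
def Sgn (s : ℝ) : Prop := s = 1 ∨ s = -1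

/-- The root system of type `G₂` in `ℝ³`:
`{±(e_i − e_j) : i < j} ∪ {±(2e_i − e_j − e_k) : {i,j,k} = {1,2,3}}`. -/
def rootsG2 : Set (Fin 3 → ℝ) :=
  {v | ∃ i j : Fin 3, i ≠ j ∧ v = stdVec i - stdVec j} ∪
  {v | ∃ i j k : Fin 3, i ≠ j ∧ i ≠ k ∧ j ≠ k ∧
    (v = (2 : ℝ) • stdVec i - stdVec j - stdVec k ∨
     v = -((2 : ℝ) • stdVec i - stdVec j - stdVec k))}

/-- `Q¹ = {e₁ − e₃, 2e₁ − e₂ − e₃, e₁ + e₃ − 2e₂}`. -/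
def QoneG2 : Set (Fin 3 → ℝ) :=
  {stdVec 0 - stdVec 2,
   (2 : ℝ) • stdVec 0 - stdVec 1 - stdVec 2,
   stdVec 0 + stdVec 2 - (2 : ℝ) • stdVec 1}

/-- `Q² = {e₁ − e₃, 2e₁ − e₂ − e₃, e₁ + e₂ − 2e₃}`. -/
def QtwoG2 : Set (Fin 3 → ℝ) :=
  {stdVec 0 - stdVec 2,
   (2 : ℝ) • stdVec 0 - stdVec 1 - stdVec 2,
   stdVec 0 + stdVec 1 - (2 : ℝ) • stdVec 2}

def zr : Fin 12 → (Fin 3 → ℤ) :=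
  ![![1,-1,0], ![1,0,-1], ![-1,1,0], ![0,1,-1], ![-1,0,1], ![0,-1,1],
    ![2,-1,-1], ![-2,1,1], ![-1,2,-1], ![1,-2,1], ![-1,-1,2], ![1,1,-2]]

def zc (v : Fin 3 → ℤ) : Fin 3 → ℝ := fun i => (v i : ℝ)

noncomputable def rv : Fin 12 → (Fin 3 → ℝ) := fun i => zc (zr i)

lemma zc_inj : Function.Injective zc := by
  intro u v h
  funext i
  have := congrFun h i
  simp only [zc] at this
  exact_mod_cast this

lemma zc_add (u v : Fin 3 → ℤ) : zc (u + v) = zc u + zc v := by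
  funext i; simp [zc]

lemma zc_sub (u v : Fin 3 → ℤ) : zc (u - v) = zc u - zc v := by
  funext i; simp [zc]

lemma zc_neg (u : Fin 3 → ℤ) : zc (-u) = -zc u := by
  funext i; simp [zc]

lemma zc_smul2 (u : Fin 3 → ℤ) : zc ((2:ℤ) • u) = (2:ℝ) • zc u := by
  funext i; simp [zc]

lemma stdVec_eq (i : Fin 3) : stdVec i = zc (Pi.single i (1:ℤ)) := by
  funext x
  simp only [stdVec, zc, Pi.single_apply]
  split_ifs <;> simp

lemma short_form (i j : Fin 3) :
    stdVec i - stdVec j = zc (Pi.single i (1:ℤ) - Pi.single j 1) := by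
  rw [zc_sub, stdVec_eq, stdVec_eq]

lemma long_form (i j k : Fin 3) :
    (2:ℝ) • stdVec i - stdVec j - stdVec k =
      zc ((2:ℤ) • Pi.single i 1 - Pi.single j 1 - Pi.single k 1) := by
  rw [zc_sub, zc_sub, zc_smul2, stdVec_eq, stdVec_eq, stdVec_eq]

lemma zshort_mem : ∀ i j : Fin 3, i ≠ j →
    ∃ t, Pi.single i (1:ℤ) - Pi.single j 1 = zr t := by decide

lemma zlong_mem : ∀ i j k : Fin 3, i ≠ j → i ≠ k → j ≠ k →
    (∃ t, (2:ℤ) • Pi.single i 1 - Pi.single j 1 - Pi.single k 1 = zr t) ∧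
    (∃ t, -((2:ℤ) • Pi.single i 1 - Pi.single j 1 - Pi.single k 1) = zr t) := by decide

lemma zr_mem : ∀ t : Fin 12,
    (∃ i j : Fin 3, i ≠ j ∧ zr t = Pi.single i (1:ℤ) - Pi.single j 1) ∨
    (∃ i j k : Fin 3, i ≠ j ∧ i ≠ k ∧ j ≠ k ∧
      (zr t = (2:ℤ) • Pi.single i 1 - Pi.single j 1 - Pi.single k 1 ∨
       zr t = -((2:ℤ) • Pi.single i 1 - Pi.single j 1 - Pi.single k 1))) := by decide

lemma roots_eq_range : rootsG2 = Set.range rv := by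
  apply Set.eq_of_subset_of_subset
  · rintro v (⟨i, j, hij, rfl⟩ | ⟨i, j, k, hij, hik, hjk, (rfl | rfl)⟩)
    · obtain ⟨t, ht⟩ := zshort_mem i j hij
      exact ⟨t, by rw [rv, ← ht, short_form]⟩
    · obtain ⟨t, ht⟩ := (zlong_mem i j k hij hik hjk).1
      exact ⟨t, by rw [rv, ← ht, long_form]⟩
    · obtain ⟨t, ht⟩ := (zlong_mem i j k hij hik hjk).2
      exact ⟨t, by rw [rv, ← ht, zc_neg, long_form]⟩
  · rintro v ⟨t, rfl⟩
    rcases zr_mem t with ⟨i, j, hij, h⟩ | ⟨i, j, k, hij, hik, hjk, (h | h)⟩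
    · exact Or.inl ⟨i, j, hij, by rw [rv, h, short_form]⟩
    · exact Or.inr ⟨i, j, k, hij, hik, hjk, Or.inl (by rw [rv, h, long_form])⟩
    · exact Or.inr ⟨i, j, k, hij, hik, hjk, Or.inr (by rw [rv, h, zc_neg, long_form])⟩

noncomputable def TG (s : ℝ) (hs : s * s = 1) (σ : Equiv.Perm (Fin 3)) :
    (Fin 3 → ℝ) ≃ₗ[ℝ] (Fin 3 → ℝ) where
  toFun v := s • (v ∘ σ)
  invFun v := s • (v ∘ σ.symm)
  map_add' u v := by funext x; simp [mul_add]
  map_smul' c v := by funext x; simp; ring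
  left_inv v := by
    funext x
    simp only [Function.comp_apply, Pi.smul_apply, smul_eq_mul, Equiv.apply_symm_apply,
      ← mul_assoc, hs, one_mul]
  right_inv v := by
    funext x
    simp only [Function.comp_apply, Pi.smul_apply, smul_eq_mul, Equiv.symm_apply_apply,
      ← mul_assoc, hs, one_mul]

lemma TG_apply (s : ℝ) (hs : s * s = 1) (σ : Equiv.Perm (Fin 3)) (v : Fin 3 → ℝ) :
    TG s hs σ v = s • (v ∘ σ) := rfl

lemma TG_symm_apply (s : ℝ) (hs : s * s = 1) (σ : Equiv.Perm (Fin 3)) (v : Fin 3 → ℝ) :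
    (TG s hs σ).symm v = s • (v ∘ σ.symm) := rfl

lemma single_comp (σ : Equiv.Perm (Fin 3)) (i : Fin 3) :
    stdVec i ∘ ⇑σ = stdVec (σ.symm i) := by
  funext x
  simp [stdVec, Pi.single_apply, Function.comp, Equiv.apply_eq_iff_eq_symm_apply]

lemma smul_comp_mem (s : ℝ) (hs : s = 1 ∨ s = -1) (σ : Equiv.Perm (Fin 3))
    (v : Fin 3 → ℝ) (hv : v ∈ rootsG2) : s • (v ∘ ⇑σ) ∈ rootsG2 := by
  rcases hv with ⟨i, j, hij, rfl⟩ | ⟨i, j, k, hij, hik, hjk, (rfl | rfl)⟩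
  · have hc : (stdVec i - stdVec j) ∘ ⇑σ = stdVec (σ.symm i) - stdVec (σ.symm j) := by
      funext x; simp [Function.comp, ← congrFun (single_comp σ i) x,
        ← congrFun (single_comp σ j) x]
    have hne : σ.symm i ≠ σ.symm j := fun h => hij (σ.symm.injective h)
    rcases hs with rfl | rfl
    · exact Or.inl ⟨σ.symm i, σ.symm j, hne, by rw [hc, one_smul]⟩
    · exact Or.inl ⟨σ.symm j, σ.symm i, hne.symm, by rw [hc, neg_one_smul, neg_sub]⟩
  · have hc : ((2:ℝ) • stdVec i - stdVec j - stdVec k) ∘ ⇑σ =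
        (2:ℝ) • stdVec (σ.symm i) - stdVec (σ.symm j) - stdVec (σ.symm k) := by
      funext x; simp [Function.comp, ← congrFun (single_comp σ i) x,
        ← congrFun (single_comp σ j) x, ← congrFun (single_comp σ k) x]
    have h1 : σ.symm i ≠ σ.symm j := fun h => hij (σ.symm.injective h)
    have h2 : σ.symm i ≠ σ.symm k := fun h => hik (σ.symm.injective h)
    have h3 : σ.symm j ≠ σ.symm k := fun h => hjk (σ.symm.injective h)
    rcases hs with rfl | rfl
    · exact Or.inr ⟨σ.symm i, σ.symm j, σ.symm k, h1, h2, h3, Or.inl (by rw [hc, one_smul])⟩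
    · exact Or.inr ⟨σ.symm i, σ.symm j, σ.symm k, h1, h2, h3, Or.inr (by rw [hc, neg_one_smul])⟩
  · have hc : (-((2:ℝ) • stdVec i - stdVec j - stdVec k)) ∘ ⇑σ =
        -((2:ℝ) • stdVec (σ.symm i) - stdVec (σ.symm j) - stdVec (σ.symm k)) := by
      funext x; simp [Function.comp, ← congrFun (single_comp σ i) x,
        ← congrFun (single_comp σ j) x, ← congrFun (single_comp σ k) x]
    have h1 : σ.symm i ≠ σ.symm j := fun h => hij (σ.symm.injective h)
    have h2 : σ.symm i ≠ σ.symm k := fun h => hik (σ.symm.injective h)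
    have h3 : σ.symm j ≠ σ.symm k := fun h => hjk (σ.symm.injective h)
    rcases hs with rfl | rfl
    · exact Or.inr ⟨σ.symm i, σ.symm j, σ.symm k, h1, h2, h3, Or.inr (by rw [hc, one_smul])⟩
    · exact Or.inr ⟨σ.symm i, σ.symm j, σ.symm k, h1, h2, h3,
        Or.inl (by rw [hc, neg_one_smul, neg_neg])⟩

lemma TG_image (s : ℝ) (hs : s * s = 1) (hs' : s = 1 ∨ s = -1) (σ : Equiv.Perm (Fin 3)) :
    TG s hs σ '' rootsG2 = rootsG2 := by
  apply Set.eq_of_subset_of_subset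
  · rintro v ⟨w, hw, rfl⟩
    exact smul_comp_mem s hs' σ w hw
  · intro v hv
    refine ⟨(TG s hs σ).symm v, ?_, (TG s hs σ).apply_symm_apply v⟩
    rw [TG_symm_apply]
    exact smul_comp_mem s hs' σ.symm v hv

lemma TG_zc_pos (hs : (1:ℝ) * 1 = 1) (σ : Equiv.Perm (Fin 3)) (w : Fin 3 → ℤ) :
    TG 1 hs σ (zc w) = zc (w ∘ ⇑σ) := by
  funext x; simp [TG_apply, zc, Function.comp]

lemma TG_zc_neg (hs : (-1:ℝ) * (-1) = 1) (σ : Equiv.Perm (Fin 3)) (w : Fin 3 → ℤ) :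
    TG (-1) hs σ (zc w) = zc (-(w ∘ ⇑σ)) := by
  funext x; simp [TG_apply, zc, Function.comp]

def negIdx : Fin 12 → Fin 12 := ![2, 4, 0, 5, 1, 3, 7, 6, 9, 8, 11, 10]

def sumOk : Fin 12 → Fin 12 → Bool :=
  ![![false,true,false,true,true,true,false,true,true,false,false,false],
    ![true,false,true,true,false,true,false,true,false,false,true,false],
    ![false,true,false,true,true,true,true,false,false,true,false,false],
    ![true,true,true,false,true,false,false,false,false,true,true,false],
    ![true,false,true,true,false,true,true,false,false,false,false,true],
    ![true,true,true,false,true,false,false,false,true,false,false,true],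
    ![false,false,true,false,true,false,false,false,true,false,true,false],
    ![true,true,false,false,false,false,false,false,false,true,false,true],
    ![true,false,false,false,false,true,true,false,false,false,true,false],
    ![false,false,true,true,false,false,false,true,false,false,false,true],
    ![false,true,false,true,false,false,true,false,true,false,false,false],
    ![false,false,false,false,true,true,false,true,false,true,false,false]]

def condIb (f : Fin 12 → Bool) : Bool :=
  (List.finRange 12).all fun i => !f i ||
    (!f (negIdx i) && (List.finRange 12).all fun j => !f j || !sumOk i j)

def maxIb (f : Fin 12 → Bool) : Bool :=
  (List.finRange 12).all fun i => f i || f (negIdx i) || sumOk i i ||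
    (List.finRange 12).any fun j => f j && (sumOk i j || sumOk j i)

def triple (a b c : Fin 12) : Fin 12 → Bool := fun j => j = a || j = b || j = c

lemma condIb_iff (f : Fin 12 → Bool) : condIb f = true ↔
    ∀ i, f i = true → (f (negIdx i) = false ∧ ∀ j, f j = true → sumOk i j = false) := by
  simp only [condIb, List.all_eq_true, List.mem_finRange, Bool.or_eq_true, Bool.and_eq_true,
    Bool.not_eq_true', true_implies, true_and]
  constructor
  · intro h i hi
    rcases h i with h' | ⟨h1, h2⟩
    · exact absurd hi (by simp [h'])
    · refine ⟨h1, fun j hj => ?_⟩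
      rcases h2 j with h' | h'
      · exact absurd hj (by simp [h'])
      · exact h'
  · intro h i
    by_cases hi : f i = true
    · obtain ⟨h1, h2⟩ := h i hi
      refine Or.inr ⟨h1, fun j => ?_⟩
      by_cases hj : f j = true
      · exact Or.inr (h2 j hj)
      · exact Or.inl (by simpa using hj)
    · exact Or.inl (by simpa using hi)

lemma maxIb_iff (f : Fin 12 → Bool) : maxIb f = true ↔
    ∀ i, f i = true ∨ f (negIdx i) = true ∨ sumOk i i = true ∨
      ∃ j, f j = true ∧ (sumOk i j = true ∨ sumOk j i = true) := by
  simp only [maxIb, List.all_eq_true, List.mem_finRange, Bool.or_eq_true, Bool.and_eq_true,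
    List.any_eq_true, true_implies, true_and]
  constructor
  · intro h i
    rcases h i with ((h' | h') | h') | ⟨j, hj1, hj2⟩
    · exact Or.inl h'
    · exact Or.inr (Or.inl h')
    · exact Or.inr (Or.inr (Or.inl h'))
    · exact Or.inr (Or.inr (Or.inr ⟨j, hj1, hj2⟩))
  · intro h i
    rcases h i with h' | h' | h' | ⟨j, hj1, hj2⟩
    · exact Or.inl (Or.inl (Or.inl h'))
    · exact Or.inl (Or.inl (Or.inr h'))
    · exact Or.inl (Or.inr h')
    · exact Or.inr ⟨j, hj1, hj2⟩

set_option maxRecDepth 10000 in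
theorem classify' : ∀ b0 b1 b2 b3 b4 b5 b6 b7 b8 b9 b10 b11 : Bool, condIb ![b0, b1, b2, b3, b4, b5, b6, b7, b8, b9, b10, b11] = true → maxIb ![b0, b1, b2, b3, b4, b5, b6, b7, b8, b9, b10, b11] = true →
    (![b0, b1, b2, b3, b4, b5, b6, b7, b8, b9, b10, b11] = triple 0 6 9 ∨
    ![b0, b1, b2, b3, b4, b5, b6, b7, b8, b9, b10, b11] = triple 0 6 11 ∨
    ![b0, b1, b2, b3, b4, b5, b6, b7, b8, b9, b10, b11] = triple 0 9 10 ∨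
    ![b0, b1, b2, b3, b4, b5, b6, b7, b8, b9, b10, b11] = triple 1 6 9 ∨
    ![b0, b1, b2, b3, b4, b5, b6, b7, b8, b9, b10, b11] = triple 1 6 11 ∨
    ![b0, b1, b2, b3, b4, b5, b6, b7, b8, b9, b10, b11] = triple 1 11 8 ∨
    ![b0, b1, b2, b3, b4, b5, b6, b7, b8, b9, b10, b11] = triple 2 8 7 ∨
    ![b0, b1, b2, b3, b4, b5, b6, b7, b8, b9, b10, b11] = triple 2 7 10 ∨
    ![b0, b1, b2, b3, b4, b5, b6, b7, b8, b9, b10, b11] = triple 2 8 11 ∨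
    ![b0, b1, b2, b3, b4, b5, b6, b7, b8, b9, b10, b11] = triple 3 11 6 ∨
    ![b0, b1, b2, b3, b4, b5, b6, b7, b8, b9, b10, b11] = triple 3 8 7 ∨
    ![b0, b1, b2, b3, b4, b5, b6, b7, b8, b9, b10, b11] = triple 3 8 11 ∨
    ![b0, b1, b2, b3, b4, b5, b6, b7, b8, b9, b10, b11] = triple 4 7 8 ∨
    ![b0, b1, b2, b3, b4, b5, b6, b7, b8, b9, b10, b11] = triple 4 10 7 ∨
    ![b0, b1, b2, b3, b4, b5, b6, b7, b8, b9, b10, b11] = triple 4 10 9 ∨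
    ![b0, b1, b2, b3, b4, b5, b6, b7, b8, b9, b10, b11] = triple 5 9 6 ∨
    ![b0, b1, b2, b3, b4, b5, b6, b7, b8, b9, b10, b11] = triple 5 10 7 ∨
    ![b0, b1, b2, b3, b4, b5, b6, b7, b8, b9, b10, b11] = triple 5 10 9) := by decide

lemma zr_inj : ∀ a b : Fin 12, zr a = zr b → a = b := by decide

lemma zr_negIdx : ∀ i, zr (negIdx i) = -(zr i) := by decide

lemma negIdx_ne : ∀ i, negIdx i ≠ i := by decide

lemma zsum_iff : ∀ i j, sumOk i j = true ↔ ∃ k, zr i + zr j = zr k := by decide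

lemma rv_inj : ∀ a b : Fin 12, rv a = rv b → a = b :=
  fun a b h => zr_inj a b (zc_inj h)

lemma rv_neg (i : Fin 12) : rv (negIdx i) = -rv i := by
  rw [rv]; rw [zr_negIdx i, zc_neg]; rfl

lemma rsum_iff (i j : Fin 12) : (rv i + rv j ∈ rootsG2) ↔ sumOk i j = true := by
  rw [roots_eq_range]
  constructor
  · rintro ⟨k, hk⟩
    refine (zsum_iff i j).mpr ⟨k, zc_inj ?_⟩
    rw [zc_add]; exact hk.symm
  · intro h
    obtain ⟨k, hk⟩ := (zsum_iff i j).mp h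
    exact ⟨k, by rw [rv]; rw [← hk, zc_add]; rfl⟩

lemma vec_of_fn (f : Fin 12 → Bool) :
    ![f 0, f 1, f 2, f 3, f 4, f 5, f 6, f 7, f 8, f 9, f 10, f 11] = f := by
  funext i; fin_cases i <;> rfl

lemma triple_set (Q : Set (Fin 3 → ℝ)) (f : Fin 12 → Bool) (a b c : Fin 12)
    (hQeq : Q = {x | ∃ i, f i = true ∧ x = rv i}) (hft : f = triple a b c) :
    Q = {rv a, rv b, rv c} := by
  subst hft
  rw [hQeq]
  ext x
  simp only [Set.mem_setOf_eq, Set.mem_insert_iff, Set.mem_singleton_iff, triple,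
    Bool.or_eq_true, decide_eq_true_eq]
  constructor
  · rintro ⟨i, ((rfl | rfl) | rfl), rfl⟩
    · exact Or.inl rfl
    · exact Or.inr (Or.inl rfl)
    · exact Or.inr (Or.inr rfl)
  · rintro (rfl | rfl | rfl)
    · exact ⟨a, Or.inl (Or.inl rfl), rfl⟩
    · exact ⟨b, Or.inl (Or.inr rfl), rfl⟩
    · exact ⟨c, Or.inr rfl, rfl⟩

def p012 : Equiv.Perm (Fin 3) := Equiv.refl _
def p021 : Equiv.Perm (Fin 3) :=
  ⟨![0,2,1], ![0,2,1], by intro x; fin_cases x <;> rfl, by intro x; fin_cases x <;> rfl⟩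
def p102 : Equiv.Perm (Fin 3) :=
  ⟨![1,0,2], ![1,0,2], by intro x; fin_cases x <;> rfl, by intro x; fin_cases x <;> rfl⟩
def p210 : Equiv.Perm (Fin 3) :=
  ⟨![2,1,0], ![2,1,0], by intro x; fin_cases x <;> rfl, by intro x; fin_cases x <;> rfl⟩
def p120 : Equiv.Perm (Fin 3) :=
  ⟨![1,2,0], ![2,0,1], by intro x; fin_cases x <;> rfl, by intro x; fin_cases x <;> rfl⟩
def p201 : Equiv.Perm (Fin 3) :=
  ⟨![2,0,1], ![1,2,0], by intro x; fin_cases x <;> rfl, by intro x; fin_cases x <;> rfl⟩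

lemma hs1 : (1:ℝ) * 1 = 1 := by norm_num
lemma hsm1 : (-1:ℝ) * (-1) = 1 := by norm_num

lemma Qone_third : stdVec 0 + stdVec 2 - (2:ℝ) • stdVec 1 =
    zc (Pi.single 0 1 + Pi.single 2 1 - (2:ℤ) • Pi.single 1 1) := by
  rw [zc_sub, zc_add, zc_smul2, stdVec_eq, stdVec_eq, stdVec_eq]

lemma Qtwo_third : stdVec 0 + stdVec 1 - (2:ℝ) • stdVec 2 =
    zc (Pi.single 0 1 + Pi.single 1 1 - (2:ℤ) • Pi.single 2 1) := by
  rw [zc_sub, zc_add, zc_smul2, stdVec_eq, stdVec_eq, stdVec_eq]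

lemma Qone_eq : QoneG2 = {rv 1, rv 6, rv 9} := by
  have h1 : stdVec 0 - stdVec 2 = rv 1 := by
    rw [short_form]; exact congrArg zc (by decide)
  have h2 : (2:ℝ) • stdVec 0 - stdVec 1 - stdVec 2 = rv 6 := by
    rw [long_form]; exact congrArg zc (by decide)
  have h3 : stdVec 0 + stdVec 2 - (2:ℝ) • stdVec 1 = rv 9 := by
    rw [Qone_third]; exact congrArg zc (by decide)
  rw [QoneG2, h1, h2, h3]

lemma Qtwo_eq : QtwoG2 = {rv 1, rv 6, rv 11} := by
  have h1 : stdVec 0 - stdVec 2 = rv 1 := by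
    rw [short_form]; exact congrArg zc (by decide)
  have h2 : (2:ℝ) • stdVec 0 - stdVec 1 - stdVec 2 = rv 6 := by
    rw [long_form]; exact congrArg zc (by decide)
  have h3 : stdVec 0 + stdVec 1 - (2:ℝ) • stdVec 2 = rv 11 := by
    rw [Qtwo_third]; exact congrArg zc (by decide)
  rw [QtwoG2, h1, h2, h3]

lemma image_triple (T : (Fin 3 → ℝ) ≃ₗ[ℝ] (Fin 3 → ℝ)) (Q : Set (Fin 3 → ℝ))
    (a b c : Fin 12) (hQ : Q = {rv a, rv b, rv c}) :
    T '' Q = {T (rv a), T (rv b), T (rv c)} := by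
  rw [hQ, Set.image_insert_eq, Set.image_insert_eq, Set.image_singleton]

/-- Every maximal element of `𝔔(R)` for `R` of type `G₂` is equivalent, under a
linear automorphism of the span of `R` preserving `R`, to `Q¹` or `Q²`. -/
theorem stmt_16 (Q : Set (Fin 3 → ℝ)) (hQ : MemQSet rootsG2 Q)
    (hmax : ∀ Q' : Set (Fin 3 → ℝ), MemQSet rootsG2 Q' → Q ⊆ Q' → Q' = Q) :
    ∃ T : (Fin 3 → ℝ) ≃ₗ[ℝ] (Fin 3 → ℝ), T '' rootsG2 = rootsG2 ∧
      (T '' Q = QoneG2 ∨ T '' Q = QtwoG2) := by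
  classical
  obtain ⟨hQR, hQneg, hQsum, hQspan⟩ := hQ
  set f : Fin 12 → Bool := fun i => decide (rv i ∈ Q) with hfdef
  have hf : ∀ i, f i = true ↔ rv i ∈ Q := fun i => by simp [hfdef]
  have hQeq : Q = {x | ∃ i, f i = true ∧ x = rv i} := by
    ext x
    constructor
    · intro hx
      have hxR : x ∈ Set.range rv := roots_eq_range ▸ hQR hx
      obtain ⟨t, rfl⟩ := hxR
      exact ⟨t, (hf t).mpr hx, rfl⟩
    · rintro ⟨i, hi, rfl⟩
      exact (hf i).mp hi
  have hcond : condIb f = true := by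
    rw [condIb_iff]
    intro i hi
    have hiQ : rv i ∈ Q := (hf i).mp hi
    constructor
    · by_contra h
      have h' : f (negIdx i) = true := by
        cases hfn : f (negIdx i)
        · exact absurd hfn h
        · rfl
      have : -rv i ∈ Q := rv_neg i ▸ (hf _).mp h'
      exact hQneg (rv i) hiQ this
    · intro j hj
      by_contra h
      have h' : sumOk i j = true := by
        cases hsij : sumOk i j
        · exact absurd hsij h
        · rfl
      exact hQsum (rv i) hiQ (rv j) ((hf j).mp hj) ((rsum_iff i j).mpr h')
  have hmaxb : maxIb f = true := by
    rw [maxIb_iff]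
    intro i
    by_cases hfi : f i = true
    · exact Or.inl hfi
    have hiQ : rv i ∉ Q := fun h => hfi ((hf i).mpr h)
    by_contra hcon
    push_neg at hcon
    obtain ⟨-, h2, h3, h4⟩ := hcon
    have hmem : MemQSet rootsG2 (insert (rv i) Q) := by
      refine ⟨?_, ?_, ?_, ?_⟩
      · rw [Set.insert_subset_iff]
        exact ⟨roots_eq_range ▸ ⟨i, rfl⟩, hQR⟩
      · rintro α (rfl | hα)
        · rintro (hm | hm)
          · have : rv (negIdx i) = rv i := by rw [rv_neg]; exact hm
            exact negIdx_ne i (rv_inj _ _ this)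
          · have : rv (negIdx i) ∈ Q := by rw [rv_neg]; exact hm
            exact h2 ((hf _).mpr this)
        · rintro (hm | hm)
          · have hα' : α = rv (negIdx i) := by rw [rv_neg, ← hm, neg_neg]
            exact h2 ((hf _).mpr (hα' ▸ hα))
          · exact hQneg α hα hm
      · rintro α (rfl | hα) β (rfl | hβ) hR
        · exact h3 ((rsum_iff i i).mp hR)
        · obtain ⟨j, hj, rfl⟩ : ∃ j, f j = true ∧ β = rv j := by
            rw [hQeq] at hβ; exact hβ
          exact (h4 j hj).1 ((rsum_iff i j).mp hR)
        · obtain ⟨j, hj, rfl⟩ : ∃ j, f j = true ∧ α = rv j := by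
            rw [hQeq] at hα; exact hα
          exact (h4 j hj).2 ((rsum_iff j i).mp hR)
        · exact hQsum α hα β hβ hR
      · intro γ hγ
        exact Submodule.span_mono (Set.subset_insert _ _) (hQspan γ hγ)
    have : insert (rv i) Q = Q := hmax _ hmem (Set.subset_insert _ _)
    exact hiQ (this ▸ Set.mem_insert (rv i) Q)
  have hclass := classify' (f 0) (f 1) (f 2) (f 3) (f 4) (f 5) (f 6) (f 7) (f 8) (f 9)
    (f 10) (f 11)
  rw [vec_of_fn f] at hclass
  have hdisj := hclass hcond hmaxb
  clear hclass hcond hmaxb hmax hQneg hQsum hQspan hQR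
  rcases hdisj with hft | hft | hft | hft | hft | hft | hft | hft | hft | hft | hft | hft |
    hft | hft | hft | hft | hft | hft
  · -- f = triple 0 6 9
    refine ⟨TG 1 hs1 p021, TG_image _ _ (Or.inl rfl) _, ?_⟩
    have hQ3 : Q = {rv 0, rv 6, rv 9} := triple_set Q f 0 6 9 hQeq hft
    have e1 : (TG 1 hs1 p021) (rv 0) = rv 1 := by
      simp only [rv]; rw [TG_zc_pos hs1]; exact congrArg zc (by decide)
    have e2 : (TG 1 hs1 p021) (rv 6) = rv 6 := by
      simp only [rv]; rw [TG_zc_pos hs1]; exact congrArg zc (by decide)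
    have e3 : (TG 1 hs1 p021) (rv 9) = rv 11 := by
      simp only [rv]; rw [TG_zc_pos hs1]; exact congrArg zc (by decide)
    exact Or.inr (by rw [image_triple _ Q 0 6 9 hQ3, e1, e2, e3, Qtwo_eq])
  · -- f = triple 0 6 11
    refine ⟨TG 1 hs1 p021, TG_image _ _ (Or.inl rfl) _, ?_⟩
    have hQ3 : Q = {rv 0, rv 6, rv 11} := triple_set Q f 0 6 11 hQeq hft
    have e1 : (TG 1 hs1 p021) (rv 0) = rv 1 := by
      simp only [rv]; rw [TG_zc_pos hs1]; exact congrArg zc (by decide)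
    have e2 : (TG 1 hs1 p021) (rv 6) = rv 6 := by
      simp only [rv]; rw [TG_zc_pos hs1]; exact congrArg zc (by decide)
    have e3 : (TG 1 hs1 p021) (rv 11) = rv 9 := by
      simp only [rv]; rw [TG_zc_pos hs1]; exact congrArg zc (by decide)
    exact Or.inl (by rw [image_triple _ Q 0 6 11 hQ3, e1, e2, e3, Qone_eq])
  · -- f = triple 0 9 10
    refine ⟨TG (-1) hsm1 p120, TG_image _ _ (Or.inr rfl) _, ?_⟩
    have hQ3 : Q = {rv 0, rv 9, rv 10} := triple_set Q f 0 9 10 hQeq hft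
    have e1 : (TG (-1) hsm1 p120) (rv 0) = rv 1 := by
      simp only [rv]; rw [TG_zc_neg hsm1]; exact congrArg zc (by decide)
    have e2 : (TG (-1) hsm1 p120) (rv 9) = rv 6 := by
      simp only [rv]; rw [TG_zc_neg hsm1]; exact congrArg zc (by decide)
    have e3 : (TG (-1) hsm1 p120) (rv 10) = rv 9 := by
      simp only [rv]; rw [TG_zc_neg hsm1]; exact congrArg zc (by decide)
    exact Or.inl (by rw [image_triple _ Q 0 9 10 hQ3, e1, e2, e3, Qone_eq])
  · -- f = triple 1 6 9
    refine ⟨TG 1 hs1 p012, TG_image _ _ (Or.inl rfl) _, ?_⟩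
    have hQ3 : Q = {rv 1, rv 6, rv 9} := triple_set Q f 1 6 9 hQeq hft
    have e1 : (TG 1 hs1 p012) (rv 1) = rv 1 := by
      simp only [rv]; rw [TG_zc_pos hs1]; exact congrArg zc (by decide)
    have e2 : (TG 1 hs1 p012) (rv 6) = rv 6 := by
      simp only [rv]; rw [TG_zc_pos hs1]; exact congrArg zc (by decide)
    have e3 : (TG 1 hs1 p012) (rv 9) = rv 9 := by
      simp only [rv]; rw [TG_zc_pos hs1]; exact congrArg zc (by decide)
    exact Or.inl (by rw [image_triple _ Q 1 6 9 hQ3, e1, e2, e3, Qone_eq])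
  · -- f = triple 1 6 11
    refine ⟨TG 1 hs1 p012, TG_image _ _ (Or.inl rfl) _, ?_⟩
    have hQ3 : Q = {rv 1, rv 6, rv 11} := triple_set Q f 1 6 11 hQeq hft
    have e1 : (TG 1 hs1 p012) (rv 1) = rv 1 := by
      simp only [rv]; rw [TG_zc_pos hs1]; exact congrArg zc (by decide)
    have e2 : (TG 1 hs1 p012) (rv 6) = rv 6 := by
      simp only [rv]; rw [TG_zc_pos hs1]; exact congrArg zc (by decide)
    have e3 : (TG 1 hs1 p012) (rv 11) = rv 11 := by
      simp only [rv]; rw [TG_zc_pos hs1]; exact congrArg zc (by decide)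
    exact Or.inr (by rw [image_triple _ Q 1 6 11 hQ3, e1, e2, e3, Qtwo_eq])
  · -- f = triple 1 11 8
    refine ⟨TG (-1) hsm1 p210, TG_image _ _ (Or.inr rfl) _, ?_⟩
    have hQ3 : Q = {rv 1, rv 11, rv 8} := triple_set Q f 1 11 8 hQeq hft
    have e1 : (TG (-1) hsm1 p210) (rv 1) = rv 1 := by
      simp only [rv]; rw [TG_zc_neg hsm1]; exact congrArg zc (by decide)
    have e2 : (TG (-1) hsm1 p210) (rv 11) = rv 6 := by
      simp only [rv]; rw [TG_zc_neg hsm1]; exact congrArg zc (by decide)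
    have e3 : (TG (-1) hsm1 p210) (rv 8) = rv 9 := by
      simp only [rv]; rw [TG_zc_neg hsm1]; exact congrArg zc (by decide)
    exact Or.inl (by rw [image_triple _ Q 1 11 8 hQ3, e1, e2, e3, Qone_eq])
  · -- f = triple 2 8 7
    refine ⟨TG 1 hs1 p120, TG_image _ _ (Or.inl rfl) _, ?_⟩
    have hQ3 : Q = {rv 2, rv 8, rv 7} := triple_set Q f 2 8 7 hQeq hft
    have e1 : (TG 1 hs1 p120) (rv 2) = rv 1 := by
      simp only [rv]; rw [TG_zc_pos hs1]; exact congrArg zc (by decide)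
    have e2 : (TG 1 hs1 p120) (rv 8) = rv 6 := by
      simp only [rv]; rw [TG_zc_pos hs1]; exact congrArg zc (by decide)
    have e3 : (TG 1 hs1 p120) (rv 7) = rv 11 := by
      simp only [rv]; rw [TG_zc_pos hs1]; exact congrArg zc (by decide)
    exact Or.inr (by rw [image_triple _ Q 2 8 7 hQ3, e1, e2, e3, Qtwo_eq])
  · -- f = triple 2 7 10
    refine ⟨TG (-1) hsm1 p021, TG_image _ _ (Or.inr rfl) _, ?_⟩
    have hQ3 : Q = {rv 2, rv 7, rv 10} := triple_set Q f 2 7 10 hQeq hft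
    have e1 : (TG (-1) hsm1 p021) (rv 2) = rv 1 := by
      simp only [rv]; rw [TG_zc_neg hsm1]; exact congrArg zc (by decide)
    have e2 : (TG (-1) hsm1 p021) (rv 7) = rv 6 := by
      simp only [rv]; rw [TG_zc_neg hsm1]; exact congrArg zc (by decide)
    have e3 : (TG (-1) hsm1 p021) (rv 10) = rv 9 := by
      simp only [rv]; rw [TG_zc_neg hsm1]; exact congrArg zc (by decide)
    exact Or.inl (by rw [image_triple _ Q 2 7 10 hQ3, e1, e2, e3, Qone_eq])
  · -- f = triple 2 8 11
    refine ⟨TG 1 hs1 p120, TG_image _ _ (Or.inl rfl) _, ?_⟩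
    have hQ3 : Q = {rv 2, rv 8, rv 11} := triple_set Q f 2 8 11 hQeq hft
    have e1 : (TG 1 hs1 p120) (rv 2) = rv 1 := by
      simp only [rv]; rw [TG_zc_pos hs1]; exact congrArg zc (by decide)
    have e2 : (TG 1 hs1 p120) (rv 8) = rv 6 := by
      simp only [rv]; rw [TG_zc_pos hs1]; exact congrArg zc (by decide)
    have e3 : (TG 1 hs1 p120) (rv 11) = rv 9 := by
      simp only [rv]; rw [TG_zc_pos hs1]; exact congrArg zc (by decide)
    exact Or.inl (by rw [image_triple _ Q 2 8 11 hQ3, e1, e2, e3, Qone_eq])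
  · -- f = triple 3 11 6
    refine ⟨TG (-1) hsm1 p201, TG_image _ _ (Or.inr rfl) _, ?_⟩
    have hQ3 : Q = {rv 3, rv 11, rv 6} := triple_set Q f 3 11 6 hQeq hft
    have e1 : (TG (-1) hsm1 p201) (rv 3) = rv 1 := by
      simp only [rv]; rw [TG_zc_neg hsm1]; exact congrArg zc (by decide)
    have e2 : (TG (-1) hsm1 p201) (rv 11) = rv 6 := by
      simp only [rv]; rw [TG_zc_neg hsm1]; exact congrArg zc (by decide)
    have e3 : (TG (-1) hsm1 p201) (rv 6) = rv 9 := by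
      simp only [rv]; rw [TG_zc_neg hsm1]; exact congrArg zc (by decide)
    exact Or.inl (by rw [image_triple _ Q 3 11 6 hQ3, e1, e2, e3, Qone_eq])
  · -- f = triple 3 8 7
    refine ⟨TG 1 hs1 p102, TG_image _ _ (Or.inl rfl) _, ?_⟩
    have hQ3 : Q = {rv 3, rv 8, rv 7} := triple_set Q f 3 8 7 hQeq hft
    have e1 : (TG 1 hs1 p102) (rv 3) = rv 1 := by
      simp only [rv]; rw [TG_zc_pos hs1]; exact congrArg zc (by decide)
    have e2 : (TG 1 hs1 p102) (rv 8) = rv 6 := by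
      simp only [rv]; rw [TG_zc_pos hs1]; exact congrArg zc (by decide)
    have e3 : (TG 1 hs1 p102) (rv 7) = rv 9 := by
      simp only [rv]; rw [TG_zc_pos hs1]; exact congrArg zc (by decide)
    exact Or.inl (by rw [image_triple _ Q 3 8 7 hQ3, e1, e2, e3, Qone_eq])
  · -- f = triple 3 8 11
    refine ⟨TG 1 hs1 p102, TG_image _ _ (Or.inl rfl) _, ?_⟩
    have hQ3 : Q = {rv 3, rv 8, rv 11} := triple_set Q f 3 8 11 hQeq hft
    have e1 : (TG 1 hs1 p102) (rv 3) = rv 1 := by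
      simp only [rv]; rw [TG_zc_pos hs1]; exact congrArg zc (by decide)
    have e2 : (TG 1 hs1 p102) (rv 8) = rv 6 := by
      simp only [rv]; rw [TG_zc_pos hs1]; exact congrArg zc (by decide)
    have e3 : (TG 1 hs1 p102) (rv 11) = rv 11 := by
      simp only [rv]; rw [TG_zc_pos hs1]; exact congrArg zc (by decide)
    exact Or.inr (by rw [image_triple _ Q 3 8 11 hQ3, e1, e2, e3, Qtwo_eq])
  · -- f = triple 4 7 8
    refine ⟨TG (-1) hsm1 p012, TG_image _ _ (Or.inr rfl) _, ?_⟩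
    have hQ3 : Q = {rv 4, rv 7, rv 8} := triple_set Q f 4 7 8 hQeq hft
    have e1 : (TG (-1) hsm1 p012) (rv 4) = rv 1 := by
      simp only [rv]; rw [TG_zc_neg hsm1]; exact congrArg zc (by decide)
    have e2 : (TG (-1) hsm1 p012) (rv 7) = rv 6 := by
      simp only [rv]; rw [TG_zc_neg hsm1]; exact congrArg zc (by decide)
    have e3 : (TG (-1) hsm1 p012) (rv 8) = rv 9 := by
      simp only [rv]; rw [TG_zc_neg hsm1]; exact congrArg zc (by decide)
    exact Or.inl (by rw [image_triple _ Q 4 7 8 hQ3, e1, e2, e3, Qone_eq])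
  · -- f = triple 4 10 7
    refine ⟨TG 1 hs1 p210, TG_image _ _ (Or.inl rfl) _, ?_⟩
    have hQ3 : Q = {rv 4, rv 10, rv 7} := triple_set Q f 4 10 7 hQeq hft
    have e1 : (TG 1 hs1 p210) (rv 4) = rv 1 := by
      simp only [rv]; rw [TG_zc_pos hs1]; exact congrArg zc (by decide)
    have e2 : (TG 1 hs1 p210) (rv 10) = rv 6 := by
      simp only [rv]; rw [TG_zc_pos hs1]; exact congrArg zc (by decide)
    have e3 : (TG 1 hs1 p210) (rv 7) = rv 11 := by
      simp only [rv]; rw [TG_zc_pos hs1]; exact congrArg zc (by decide)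
    exact Or.inr (by rw [image_triple _ Q 4 10 7 hQ3, e1, e2, e3, Qtwo_eq])
  · -- f = triple 4 10 9
    refine ⟨TG 1 hs1 p210, TG_image _ _ (Or.inl rfl) _, ?_⟩
    have hQ3 : Q = {rv 4, rv 10, rv 9} := triple_set Q f 4 10 9 hQeq hft
    have e1 : (TG 1 hs1 p210) (rv 4) = rv 1 := by
      simp only [rv]; rw [TG_zc_pos hs1]; exact congrArg zc (by decide)
    have e2 : (TG 1 hs1 p210) (rv 10) = rv 6 := by
      simp only [rv]; rw [TG_zc_pos hs1]; exact congrArg zc (by decide)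
    have e3 : (TG 1 hs1 p210) (rv 9) = rv 9 := by
      simp only [rv]; rw [TG_zc_pos hs1]; exact congrArg zc (by decide)
    exact Or.inl (by rw [image_triple _ Q 4 10 9 hQ3, e1, e2, e3, Qone_eq])
  · -- f = triple 5 9 6
    refine ⟨TG (-1) hsm1 p102, TG_image _ _ (Or.inr rfl) _, ?_⟩
    have hQ3 : Q = {rv 5, rv 9, rv 6} := triple_set Q f 5 9 6 hQeq hft
    have e1 : (TG (-1) hsm1 p102) (rv 5) = rv 1 := by
      simp only [rv]; rw [TG_zc_neg hsm1]; exact congrArg zc (by decide)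
    have e2 : (TG (-1) hsm1 p102) (rv 9) = rv 6 := by
      simp only [rv]; rw [TG_zc_neg hsm1]; exact congrArg zc (by decide)
    have e3 : (TG (-1) hsm1 p102) (rv 6) = rv 9 := by
      simp only [rv]; rw [TG_zc_neg hsm1]; exact congrArg zc (by decide)
    exact Or.inl (by rw [image_triple _ Q 5 9 6 hQ3, e1, e2, e3, Qone_eq])
  · -- f = triple 5 10 7
    refine ⟨TG 1 hs1 p201, TG_image _ _ (Or.inl rfl) _, ?_⟩
    have hQ3 : Q = {rv 5, rv 10, rv 7} := triple_set Q f 5 10 7 hQeq hft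
    have e1 : (TG 1 hs1 p201) (rv 5) = rv 1 := by
      simp only [rv]; rw [TG_zc_pos hs1]; exact congrArg zc (by decide)
    have e2 : (TG 1 hs1 p201) (rv 10) = rv 6 := by
      simp only [rv]; rw [TG_zc_pos hs1]; exact congrArg zc (by decide)
    have e3 : (TG 1 hs1 p201) (rv 7) = rv 9 := by
      simp only [rv]; rw [TG_zc_pos hs1]; exact congrArg zc (by decide)
    exact Or.inl (by rw [image_triple _ Q 5 10 7 hQ3, e1, e2, e3, Qone_eq])
  · -- f = triple 5 10 9
    refine ⟨TG 1 hs1 p201, TG_image _ _ (Or.inl rfl) _, ?_⟩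
    have hQ3 : Q = {rv 5, rv 10, rv 9} := triple_set Q f 5 10 9 hQeq hft
    have e1 : (TG 1 hs1 p201) (rv 5) = rv 1 := by
      simp only [rv]; rw [TG_zc_pos hs1]; exact congrArg zc (by decide)
    have e2 : (TG 1 hs1 p201) (rv 10) = rv 6 := by
      simp only [rv]; rw [TG_zc_pos hs1]; exact congrArg zc (by decide)
    have e3 : (TG 1 hs1 p201) (rv 9) = rv 11 := by
      simp only [rv]; rw [TG_zc_pos hs1]; exact congrArg zc (by decide)
    exact Or.inr (by rw [image_triple _ Q 5 10 9 hQ3, e1, e2, e3, Qtwo_eq])
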